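/- Let N ≥ 1 be a natural number and let q, a, b, e ∈ ℂ with |q| < 1, a ≠ 0, b ≠ 0, e ≠ 0, and suppose 1 − b q^k ≠ 0 for 0 ≤ k ≤ N−1 and e ≠ q^k for 1 ≤ k ≤ N (so that (q/e)_n ≠ 0 for n ≤ N). Then ∑_{n=1}^N [N,n]_q (−1)^n (q)_{n−1} (b/a)_n a^n q^{n(n+1)/2} / ((b)_n (q/e)_n e^n) = ∑_{n=1}^N [N,n]_q (q)_{n−1} (b)_{N−n} (aq/(be))_n b^n / ((b)_N (q/e)_n) − ∑_{n=1}^N b q^{n−1} / (1 − b q^{n−1}). -/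

import Mathlib

open Finset

/-- Finite q-Pochhammer symbol `(a;q)_n`. -/
noncomputable def qPoch (q a : ℂ) (n : ℕ) : ℂ :=
  ∏ k ∈ Finset.range n, (1 - a * q ^ k)

/-- Infinite q-Pochhammer symbol `(a;q)_∞`. -/
noncomputable def qPochInf (q a : ℂ) : ℂ :=
  ∏' k : ℕ, (1 - a * q ^ k)

/-- q-binomial coefficient. -/
noncomputable def qBinom (q : ℂ) (N n : ℕ) : ℂ :=
  qPoch q q N / (qPoch q q n * qPoch q q (N - n))

namespace S14

lemma qPoch_zero (q x : ℂ) : qPoch q x 0 = 1 := by simp [qPoch]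

lemma qPoch_succ (q x : ℂ) (n : ℕ) : qPoch q x (n+1) = qPoch q x n * (1 - x * q^n) :=
  Finset.prod_range_succ _ n

lemma qPoch_succ' (q x : ℂ) (n : ℕ) : qPoch q x (n+1) = (1 - x) * qPoch q (x*q) n := by
  unfold qPoch
  rw [Finset.prod_range_succ', pow_zero, mul_one, mul_comm]
  congr 1
  exact Finset.prod_congr rfl fun k _ => by ring

lemma qPoch_add (q x : ℂ) (m n : ℕ) :
    qPoch q x (m+n) = qPoch q x m * qPoch q (x*q^m) n := by
  induction n with
  | zero => simp [qPoch_zero]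
  | succ n ih =>
    rw [show m+(n+1) = (m+n)+1 by ring, qPoch_succ, ih, qPoch_succ]
    ring

lemma one_sub_ne (q : ℂ) (hqp : ∀ m, qPoch q q m ≠ 0) (n : ℕ) : 1 - q * q^n ≠ 0 := by
  have h := hqp (n+1)
  rw [qPoch_succ] at h
  exact (mul_ne_zero_iff.mp h).2

lemma qBinom_zero (q : ℂ) (N : ℕ) (h : qPoch q q N ≠ 0) : qBinom q N 0 = 1 := by
  unfold qBinom
  rw [Nat.sub_zero, qPoch_zero, one_mul, div_self h]

lemma qBinom_self (q : ℂ) (N : ℕ) (h : qPoch q q N ≠ 0) : qBinom q N N = 1 := by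
  unfold qBinom
  rw [Nat.sub_self, qPoch_zero, mul_one, div_self h]

lemma qBinom_pascal (q : ℂ) (hqp : ∀ m, qPoch q q m ≠ 0) (n m : ℕ) :
    qBinom q (n+m+2) (n+1) = qBinom q (n+m+1) (n+1) + q^(m+1) * qBinom q (n+m+1) n := by
  unfold qBinom
  rw [show n+m+2-(n+1) = m+1 by omega, show n+m+1-(n+1) = m by omega,
    show n+m+1-n = m+1 by omega]
  rw [show n+m+2 = (n+m+1)+1 by ring, qPoch_succ q q (n+m+1),
    qPoch_succ q q n, qPoch_succ q q m]
  have h1 := hqp n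
  have h2 := hqp m
  have h3 := one_sub_ne q hqp n
  have h4 := one_sub_ne q hqp m
  field_simp
  ring

lemma sum_split (q : ℂ) (hqp : ∀ m, qPoch q q m ≠ 0) (N : ℕ) (f : ℕ → ℂ) :
    ∑ n ∈ range (N+2), qBinom q (N+1) n * f n
      = ∑ n ∈ range (N+1), qBinom q N n * f n
        + ∑ n ∈ range (N+1), q^(N-n) * qBinom q N n * f (n+1) := by
  rw [Finset.sum_range_succ' (fun n => qBinom q (N+1) n * f n) (N+1),
    Finset.sum_range_succ' (fun n => qBinom q N n * f n) N,
    qBinom_zero q (N+1) (hqp _), qBinom_zero q N (hqp _),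
    Finset.sum_range_succ (fun i => qBinom q (N+1) (i+1) * f (i+1)) N,
    Finset.sum_range_succ (fun n => q^(N-n) * qBinom q N n * f (n+1)) N,
    qBinom_self q (N+1) (hqp _), qBinom_self q N (hqp _), Nat.sub_self, pow_zero]
  have key : ∑ i ∈ range N, qBinom q (N+1) (i+1) * f (i+1)
      = ∑ i ∈ range N, (qBinom q N (i+1) * f (i+1) + q^(N-i) * qBinom q N i * f (i+1)) := by
    apply Finset.sum_congr rfl
    intro i hi
    have hi' : i < N := mem_range.mp hi
    obtain ⟨m, rfl⟩ : ∃ m, N = i + m + 1 := ⟨N - i - 1, by omega⟩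
    rw [show i+m+1+1 = i+m+2 by ring, qBinom_pascal q hqp i m,
      show i+m+1-i = m+1 by omega]
    ring
  rw [key, Finset.sum_add_distrib]
  ring


noncomputable def Eprod (q e : ℂ) (N n : ℕ) : ℂ := ∏ k ∈ Finset.Ico (n+1) (N+1), (e - q^k)

noncomputable def Sterm (q a b c e : ℂ) (N n : ℕ) : ℂ :=
  (-1)^n * q^(n*(n+1)/2) * (∏ k ∈ range n, (a - b*q^k)) * qPoch q c n
    * qPoch q (b*c*q^n) (N-n) * Eprod q e N n

noncomputable def Tterm (q a b c e : ℂ) (N n : ℕ) : ℂ :=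
  (∏ k ∈ range n, (b*e - a*q^(k+1))) * qPoch q b (N-n) * qPoch q c n * Eprod q e N n

noncomputable def Ssum (q a b c e : ℂ) (N : ℕ) : ℂ :=
  ∑ n ∈ range (N+1), qBinom q N n * Sterm q a b c e N n

noncomputable def Tsum (q a b c e : ℂ) (N : ℕ) : ℂ :=
  ∑ n ∈ range (N+1), qBinom q N n * Tterm q a b c e N n

lemma tri_succ (n : ℕ) : (n+1)*((n+1)+1)/2 = n*(n+1)/2 + (n+1) := by
  have h2 : (2:ℕ) ∣ n*(n+1) := (Nat.even_mul_succ_self n).two_dvd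
  have hm : (n+1)*((n+1)+1) = n*(n+1) + 2*(n+1) := by ring
  omega

lemma stepS1 (q a b c e : ℂ) (n m : ℕ) :
    Sterm q a b c e (n+m+1) n
      = (1 - b*c*q^(n+m)) * (e - q^(n+m+1)) * Sterm q a b c e (n+m) n := by
  unfold Sterm Eprod
  rw [show n+m+1-n = m+1 by omega, show n+m-n = m by omega, qPoch_succ,
    Finset.prod_Ico_succ_top (by omega : n+1 ≤ n+m+1)]
  ring

lemma stepS2 (q a b c e : ℂ) (hq : q ≠ 0) (n m : ℕ) :
    q^m * Sterm q a b c e (n+m+1) (n+1)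
      = -((a-b)*(1-c)*q^(2*(n+m)+1)) * Sterm q (a/q) b (c*q) (e/q) (n+m) n := by
  unfold Sterm Eprod
  rw [show n+m+1-(n+1) = m by omega, show n+m-n = m by omega]
  have hG : (∏ k ∈ range (n+1), (a - b*q^k))
      = (a - b) * (q^n * ∏ k ∈ range n, (a/q - b*q^k)) := by
    rw [Finset.prod_range_succ', pow_zero, mul_one,
      show (∏ k ∈ range n, (a - b*q^(k+1))) = ∏ k ∈ range n, (q * (a/q - b*q^k)) from
        Finset.prod_congr rfl fun k _ => by field_simp; try ring,
      Finset.prod_mul_distrib, Finset.prod_const, Finset.card_range]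
    ring
  have hbc : qPoch q (b*c*q^(n+1)) m = qPoch q (b*(c*q)*q^n) m := by
    rw [show b*c*q^(n+1) = b*(c*q)*q^n by ring]
  have hE : (∏ k ∈ Ico (n+1+1) (n+m+1+1), (e - q^k))
      = q^m * ∏ k ∈ Ico (n+1) (n+m+1), (e/q - q^k) := by
    rw [Finset.prod_Ico_eq_prod_range, Finset.prod_Ico_eq_prod_range,
      show n+m+1+1-(n+1+1) = m by omega, show n+m+1-(n+1) = m by omega,
      show (∏ k ∈ range m, (e - q^(n+1+1+k))) = ∏ k ∈ range m, (q * (e/q - q^(n+1+k))) from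
        Finset.prod_congr rfl fun k _ => by field_simp; try ring,
      Finset.prod_mul_distrib, Finset.prod_const, Finset.card_range]
  rw [hG, hbc, hE, qPoch_succ' q c n, tri_succ, pow_add]
  ring

lemma stepT (q a b c e : ℂ) (hq : q ≠ 0) (n m : ℕ) :
    Tterm q a b c e (n+m+1) n + q^m * Tterm q a b c e (n+m+1) (n+1)
      = (1 - b*c*q^(n+m))*(e - q^(n+m+1)) * Tterm q a b c e (n+m) n
        - (a-b)*(1-c)*q^(2*(n+m)+1) * Tterm q (a/q) b (c*q) (e/q) (n+m) n := by
  unfold Tterm Eprod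
  rw [show n+m+1-n = m+1 by omega, show n+m+1-(n+1) = m by omega,
    show n+m-n = m by omega]
  have hP : (∏ k ∈ range n, (b*e - a*q^(k+1)))
      = q^n * ∏ k ∈ range n, (b*(e/q) - (a/q)*q^(k+1)) := by
    rw [show (∏ k ∈ range n, (b*e - a*q^(k+1)))
        = ∏ k ∈ range n, (q * (b*(e/q) - (a/q)*q^(k+1))) from
      Finset.prod_congr rfl fun k _ => by field_simp; try ring,
      Finset.prod_mul_distrib, Finset.prod_const, Finset.card_range]
  have hE2 : (∏ k ∈ Ico (n+1+1) (n+m+1+1), (e - q^k))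
      = q^m * ∏ k ∈ Ico (n+1) (n+m+1), (e/q - q^k) := by
    rw [Finset.prod_Ico_eq_prod_range, Finset.prod_Ico_eq_prod_range,
      show n+m+1+1-(n+1+1) = m by omega, show n+m+1-(n+1) = m by omega,
      show (∏ k ∈ range m, (e - q^(n+1+1+k))) = ∏ k ∈ range m, (q * (e/q - q^(n+1+k))) from
        Finset.prod_congr rfl fun k _ => by field_simp; try ring,
      Finset.prod_mul_distrib, Finset.prod_const, Finset.card_range]
  have hAB : (∏ k ∈ Ico (n+1) (n+m+1), (e - q^k)) * (e - q^(n+m+1))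
      = (e - q^(n+1)) * (q^m * ∏ k ∈ Ico (n+1) (n+m+1), (e/q - q^k)) := by
    rw [← hE2, ← Finset.prod_Ico_succ_top (by omega : n+1 ≤ n+m+1),
      show n+m+1+1 = n+m+2 by ring]
    exact Finset.prod_eq_prod_Ico_succ_bot (by omega : n+1 < n+m+2) _
  have hc2 : (1-c) * qPoch q (c*q) n = qPoch q c n * (1 - c*q^n) := by
    rw [← qPoch_succ', qPoch_succ]
  rw [Finset.prod_range_succ, hP, qPoch_succ q b m, qPoch_succ q c n,
    Finset.prod_Ico_succ_top (by omega : n+1 ≤ n+m+1), hE2]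
  linear_combination (q^n * (∏ k ∈ range n, (b*(e/q) - (a/q)*q^(k+1))) * qPoch q b m
      * qPoch q c n * ((1-b*q^m) - (1-b*c*q^(n+m)))) * hAB
    + ((a-b)*q^(2*(n+m)+1) * (∏ k ∈ range n, (b*(e/q) - (a/q)*q^(k+1))) * qPoch q b m
      * (∏ k ∈ Ico (n+1) (n+m+1), (e/q - q^k))) * hc2


lemma master (q b : ℂ) (hq : q ≠ 0) (hqp : ∀ m, qPoch q q m ≠ 0) :
    ∀ (N : ℕ) (a c e : ℂ), Ssum q a b c e N = Tsum q a b c e N := by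
  intro N
  induction N with
  | zero =>
    intro a c e
    simp [Ssum, Tsum, Sterm, Tterm, Eprod, qBinom, qPoch]
  | succ N ih =>
    intro a c e
    have hS : Ssum q a b c e (N+1)
        = (1 - b*c*q^N)*(e - q^(N+1)) * Ssum q a b c e N
          - (a-b)*(1-c)*q^(2*N+1) * Ssum q (a/q) b (c*q) (e/q) N := by
      unfold Ssum
      rw [show N+1+1 = N+2 by ring, sum_split q hqp N (Sterm q a b c e (N+1))]
      have h1 : ∑ n ∈ range (N+1), qBinom q N n * Sterm q a b c e (N+1) n
          = ∑ n ∈ range (N+1), (1 - b*c*q^N)*(e - q^(N+1)) * (qBinom q N n * Sterm q a b c e N n) := by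
        apply Finset.sum_congr rfl
        intro n hn
        have hn' : n < N + 1 := mem_range.mp hn
        obtain ⟨m, rfl⟩ : ∃ m, N = n + m := ⟨N - n, by omega⟩
        rw [show n+m+1 = (n+m)+1 by ring, stepS1]
        ring
      have h2 : ∑ n ∈ range (N+1), q^(N-n) * qBinom q N n * Sterm q a b c e (N+1) (n+1)
          = ∑ n ∈ range (N+1), -((a-b)*(1-c)*q^(2*N+1)) * (qBinom q N n * Sterm q (a/q) b (c*q) (e/q) N n) := by
        apply Finset.sum_congr rfl
        intro n hn
        have hn' : n < N + 1 := mem_range.mp hn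
        obtain ⟨m, rfl⟩ : ∃ m, N = n + m := ⟨N - n, by omega⟩
        rw [show n+m-n = m by omega, show n+m+1 = (n+m)+1 by ring]
        have := stepS2 q a b c e hq n m
        calc q^m * qBinom q (n+m) n * Sterm q a b c e (n+m+1) (n+1)
            = qBinom q (n+m) n * (q^m * Sterm q a b c e (n+m+1) (n+1)) := by ring
          _ = qBinom q (n+m) n * (-((a-b)*(1-c)*q^(2*(n+m)+1)) * Sterm q (a/q) b (c*q) (e/q) (n+m) n) := by rw [this]
          _ = -((a-b)*(1-c)*q^(2*(n+m)+1)) * (qBinom q (n+m) n * Sterm q (a/q) b (c*q) (e/q) (n+m) n) := by ring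
      rw [h1, h2, ← Finset.mul_sum, ← Finset.mul_sum]
      ring
    have hT : Tsum q a b c e (N+1)
        = (1 - b*c*q^N)*(e - q^(N+1)) * Tsum q a b c e N
          - (a-b)*(1-c)*q^(2*N+1) * Tsum q (a/q) b (c*q) (e/q) N := by
      unfold Tsum
      rw [show N+1+1 = N+2 by ring, sum_split q hqp N (Tterm q a b c e (N+1)),
        ← Finset.sum_add_distrib]
      have h1 : ∑ n ∈ range (N+1),
            (qBinom q N n * Tterm q a b c e (N+1) n
              + q^(N-n) * qBinom q N n * Tterm q a b c e (N+1) (n+1))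
          = ∑ n ∈ range (N+1),
            ((1 - b*c*q^N)*(e - q^(N+1)) * (qBinom q N n * Tterm q a b c e N n)
              - (a-b)*(1-c)*q^(2*N+1) * (qBinom q N n * Tterm q (a/q) b (c*q) (e/q) N n)) := by
        apply Finset.sum_congr rfl
        intro n hn
        have hn' : n < N + 1 := mem_range.mp hn
        obtain ⟨m, rfl⟩ : ∃ m, N = n + m := ⟨N - n, by omega⟩
        rw [show n+m-n = m by omega]
        have hstep := stepT q a b c e hq n m
        calc qBinom q (n+m) n * Tterm q a b c e (n+m+1) n
              + q^m * qBinom q (n+m) n * Tterm q a b c e (n+m+1) (n+1)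
            = qBinom q (n+m) n * (Tterm q a b c e (n+m+1) n + q^m * Tterm q a b c e (n+m+1) (n+1)) := by ring
          _ = qBinom q (n+m) n * ((1 - b*c*q^(n+m))*(e - q^(n+m+1)) * Tterm q a b c e (n+m) n
              - (a-b)*(1-c)*q^(2*(n+m)+1) * Tterm q (a/q) b (c*q) (e/q) (n+m) n) := by rw [hstep]
          _ = (1 - b*c*q^(n+m))*(e - q^(n+m+1)) * (qBinom q (n+m) n * Tterm q a b c e (n+m) n)
              - (a-b)*(1-c)*q^(2*(n+m)+1) * (qBinom q (n+m) n * Tterm q (a/q) b (c*q) (e/q) (n+m) n) := by ring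
      rw [h1, Finset.sum_sub_distrib, ← Finset.mul_sum, ← Finset.mul_sum]
    rw [hS, hT, ih, ih]

lemma telescope (q : ℂ) :
    ∀ (N : ℕ) (b c : ℂ), qPoch q (b*c) N - qPoch q b N
      = (1-c) * ∑ k ∈ range N, b*q^k * qPoch q b k * qPoch q (b*c*q^(k+1)) (N-1-k) := by
  intro N
  induction N with
  | zero => intro b c; simp [qPoch_zero]
  | succ N ih =>
    intro b c
    rw [Finset.sum_range_succ' (fun k => b*q^k * qPoch q b k * qPoch q (b*c*q^(k+1)) (N+1-1-k)) N]
    have h0 : b*q^0 * qPoch q b 0 * qPoch q (b*c*q^(0+1)) (N+1-1-0) = b * qPoch q (b*c*q) N := by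
      rw [qPoch_zero]; norm_num
    have hterm : ∀ k ∈ range N,
        b*q^(k+1) * qPoch q b (k+1) * qPoch q (b*c*q^(k+1+1)) (N+1-1-(k+1))
          = (1-b) * ((b*q)*q^k * qPoch q (b*q) k * qPoch q ((b*q)*c*q^(k+1)) (N-1-k)) := by
      intro k hk
      rw [qPoch_succ' q b k, show N+1-1-(k+1) = N-1-k by omega,
        show b*c*q^(k+1+1) = (b*q)*c*q^(k+1) by ring]
      ring
    rw [Finset.sum_congr rfl hterm, h0]
    have hL1 : qPoch q (b*c) (N+1) = (1 - b*c) * qPoch q ((b*q)*c) N := by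
      rw [qPoch_succ' q (b*c) N, show b*c*q = b*q*c by ring]
    have hL2 : qPoch q b (N+1) = (1 - b) * qPoch q (b*q) N := qPoch_succ' q b N
    have hbcq : qPoch q (b*c*q) N = qPoch q ((b*q)*c) N := by rw [show b*c*q = b*q*c by ring]
    rw [hL1, hL2, hbcq, ← Finset.mul_sum]
    linear_combination (1-b) * ih (b*q) c

noncomputable def Dfun (q a b e : ℂ) (N : ℕ) (c : ℂ) : ℂ :=
  (∑ j ∈ range N, qBinom q N (j+1) * ((-1)^(j+1) * q^((j+1)*((j+1)+1)/2))
      * (∏ k ∈ range (j+1), (a - b*q^k)) * qPoch q (c*q) j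
      * qPoch q (b*c*q^(j+1)) (N-(j+1)) * Eprod q e N (j+1))
  - (∑ j ∈ range N, qBinom q N (j+1) * (∏ k ∈ range (j+1), (b*e - a*q^(k+1)))
      * qPoch q b (N-(j+1)) * qPoch q (c*q) j * Eprod q e N (j+1))
  + (∑ k ∈ range N, b*q^k * qPoch q b k * qPoch q (b*c*q^(k+1)) (N-1-k)) * Eprod q e N 0

lemma claim1 (q a b e : ℂ) (hqp : ∀ m, qPoch q q m ≠ 0) (N : ℕ) (c : ℂ) :
    (1-c) * Dfun q a b e N c = Ssum q a b c e N - Tsum q a b c e N := by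
  unfold Ssum Tsum Dfun
  rw [Finset.sum_range_succ' (fun n => qBinom q N n * Sterm q a b c e N n) N,
    Finset.sum_range_succ' (fun n => qBinom q N n * Tterm q a b c e N n) N,
    qBinom_zero q N (hqp N)]
  have hS0 : Sterm q a b c e N 0 = qPoch q (b*c) N * Eprod q e N 0 := by
    unfold Sterm
    simp [qPoch_zero]
  have hT0 : Tterm q a b c e N 0 = qPoch q b N * Eprod q e N 0 := by
    unfold Tterm
    simp [qPoch_zero]
  have hSj : ∑ j ∈ range N, qBinom q N (j+1) * Sterm q a b c e N (j+1)
      = (1-c) * ∑ j ∈ range N, qBinom q N (j+1) * ((-1)^(j+1) * q^((j+1)*((j+1)+1)/2))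
          * (∏ k ∈ range (j+1), (a - b*q^k)) * qPoch q (c*q) j
          * qPoch q (b*c*q^(j+1)) (N-(j+1)) * Eprod q e N (j+1) := by
    rw [Finset.mul_sum]
    apply Finset.sum_congr rfl
    intro j _
    unfold Sterm
    rw [qPoch_succ' q c j]
    ring
  have hTj : ∑ j ∈ range N, qBinom q N (j+1) * Tterm q a b c e N (j+1)
      = (1-c) * ∑ j ∈ range N, qBinom q N (j+1) * (∏ k ∈ range (j+1), (b*e - a*q^(k+1)))
          * qPoch q b (N-(j+1)) * qPoch q (c*q) j * Eprod q e N (j+1) := by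
    rw [Finset.mul_sum]
    apply Finset.sum_congr rfl
    intro j _
    unfold Tterm
    rw [qPoch_succ' q c j]
    ring
  rw [hSj, hTj, hS0, hT0, one_mul, one_mul]
  linear_combination (-(Eprod q e N 0)) * telescope q N b c

lemma qPoch_cont (q : ℂ) (m : ℕ) {f : ℂ → ℂ} (hf : Continuous f) :
    Continuous fun c => qPoch q (f c) m := by
  unfold qPoch
  exact continuous_finset_prod _ fun k _ => continuous_const.sub (hf.mul continuous_const)

lemma Dfun_cont (q a b e : ℂ) (N : ℕ) : Continuous (Dfun q a b e N) := by
  unfold Dfun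
  apply Continuous.add
  · apply Continuous.sub
    · apply continuous_finset_sum
      intro j _
      exact ((((continuous_const.mul (qPoch_cont q j (continuous_id.mul continuous_const))).mul
        (qPoch_cont q (N-(j+1)) ((continuous_const.mul continuous_id).mul continuous_const))).mul
        continuous_const))
    · apply continuous_finset_sum
      intro j _
      exact ((continuous_const.mul (qPoch_cont q j (continuous_id.mul continuous_const))).mul
        continuous_const)
  · apply Continuous.mul _ continuous_const
    apply continuous_finset_sum
    intro k _
    exact continuous_const.mul
      (qPoch_cont q (N-1-k) ((continuous_const.mul continuous_id).mul continuous_const))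

lemma Dfun_one (q a b e : ℂ) (N : ℕ) (hz : ∀ c, c ≠ 1 → Dfun q a b e N c = 0) :
    Dfun q a b e N 1 = 0 := by
  have hf : Continuous (Dfun q a b e N) := Dfun_cont q a b e N
  have h1 : Filter.Tendsto (Dfun q a b e N) (nhdsWithin 1 {(1:ℂ)}ᶜ) (nhds (Dfun q a b e N 1)) :=
    (hf.tendsto 1).mono_left nhdsWithin_le_nhds
  have h2 : Filter.Tendsto (Dfun q a b e N) (nhdsWithin 1 {(1:ℂ)}ᶜ) (nhds 0) := by
    apply Filter.Tendsto.congr' _ tendsto_const_nhds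
    filter_upwards [self_mem_nhdsWithin] with c hc
    exact (hz c hc).symm
  exact tendsto_nhds_unique h1 h2

end S14

open S14 in
theorem stmt14 (N : ℕ) (hN : 1 ≤ N) (q a b e : ℂ) (hq : ‖q‖ < 1)
    (ha : a ≠ 0) (hb : b ≠ 0) (he : e ≠ 0)
    (hb' : ∀ k : ℕ, k ≤ N - 1 → 1 - b * q ^ k ≠ 0)
    (he' : ∀ k : ℕ, 1 ≤ k → k ≤ N → e ≠ q ^ k) :
    (∑ n ∈ Finset.Icc 1 N,
      qBinom q N n * (-1 : ℂ) ^ n * qPoch q q (n - 1) * qPoch q (b / a) n * a ^ n *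
        q ^ (n * (n + 1) / 2) /
      (qPoch q b n * qPoch q (q / e) n * e ^ n))
    = (∑ n ∈ Finset.Icc 1 N,
        qBinom q N n * qPoch q q (n - 1) * qPoch q b (N - n) *
          qPoch q (a * q / (b * e)) n * b ^ n / (qPoch q b N * qPoch q (q / e) n))
      - ∑ n ∈ Finset.Icc 1 N, b * q ^ (n - 1) / (1 - b * q ^ (n - 1)) := by
  have conv : ∀ f : ℕ → ℂ, ∑ n ∈ Finset.Icc 1 N, f n = ∑ j ∈ range N, f (j+1) := by
    intro f
    rw [← Finset.Ico_add_one_right_eq_Icc, Finset.sum_Ico_eq_sum_range]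
    try simp only [Nat.add_sub_cancel]
    exact Finset.sum_congr rfl fun i _ => by rw [Nat.add_comm]
  have conv' : ∀ (M : ℕ) (f : ℕ → ℂ), ∑ n ∈ Finset.Icc 1 M, f n = ∑ j ∈ range M, f (j+1) := by
    intro M f
    rw [← Finset.Ico_add_one_right_eq_Icc, Finset.sum_Ico_eq_sum_range]
    try simp only [Nat.add_sub_cancel]
    exact Finset.sum_congr rfl fun i _ => by rw [Nat.add_comm]
  by_cases hq0 : q = 0
  · -- q = 0 case
    subst hq0
    have hb1 : (1:ℂ) - b ≠ 0 := by simpa using hb' 0 (by omega)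
    have qP0 : ∀ (x : ℂ) (n : ℕ), qPoch 0 x (n+1) = 1 - x := by
      intro x n
      unfold qPoch
      rw [Finset.prod_range_succ']
      simp [pow_succ]
    have qP00 : ∀ m : ℕ, qPoch 0 (0:ℂ) m = 1 := by
      intro m
      cases m with
      | zero => exact qPoch_zero 0 0
      | succ m => rw [qP0]; ring
    have hLHS : (∑ n ∈ Finset.Icc 1 N,
        qBinom 0 N n * (-1 : ℂ) ^ n * qPoch 0 0 (n - 1) * qPoch 0 (b / a) n * a ^ n *
          (0:ℂ) ^ (n * (n + 1) / 2) /
        (qPoch 0 b n * qPoch 0 ((0:ℂ) / e) n * e ^ n)) = 0 := by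
      apply Finset.sum_eq_zero
      intro n hn
      have hn1 : 1 ≤ n := (Finset.mem_Icc.mp hn).1
      have h2 : 2 ≤ n*(n+1) := by
        calc 2 = 1*2 := by norm_num
        _ ≤ n*(n+1) := Nat.mul_le_mul hn1 (by omega)
      have hne : n*(n+1)/2 ≠ 0 := by omega
      rw [zero_pow hne]
      simp
    rw [hLHS]
    have hR2 : (∑ n ∈ Finset.Icc 1 N, b * (0:ℂ) ^ (n - 1) / (1 - b * (0:ℂ) ^ (n - 1)))
        = b / (1 - b) := by
      rw [Finset.sum_eq_single_of_mem 1 (Finset.mem_Icc.mpr ⟨le_refl 1, hN⟩)]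
      · simp
      · intro n hn hne
        have hn1 : 1 ≤ n := (Finset.mem_Icc.mp hn).1
        have : n - 1 ≠ 0 := by omega
        rw [zero_pow this]
        simp
    rw [hR2]
    have hqb : ∀ n : ℕ, qBinom 0 N n = 1 := by
      intro n
      unfold qBinom
      rw [qP00, qP00, qP00]
      norm_num
    have hR1 : (∑ n ∈ Finset.Icc 1 N,
        qBinom 0 N n * qPoch 0 0 (n - 1) * qPoch 0 b (N - n) *
          qPoch 0 (a * 0 / (b * e)) n * b ^ n / (qPoch 0 b N * qPoch 0 ((0:ℂ) / e) n))
        = (∑ n ∈ Finset.Icc 1 N, qPoch 0 b (N - n) * b ^ n) / (1 - b) := by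
      rw [Finset.sum_div]
      apply Finset.sum_congr rfl
      intro n hn
      simp only [mul_zero, zero_div, hqb, qP00, one_mul, mul_one]
      obtain ⟨M, rfl⟩ : ∃ M, N = M + 1 := ⟨N - 1, by omega⟩
      rw [qP0]
    rw [hR1]
    have geo : ∀ (M : ℕ), 1 ≤ M → (∑ n ∈ Finset.Icc 1 M, qPoch 0 b (M - n) * b ^ n) = b := by
      intro M
      induction M with
      | zero => omega
      | succ M ih =>
        intro _
        by_cases hM : M = 0
        · subst hM
          simp [qPoch_zero]
        · have hM1 : 1 ≤ M := by omega
          rw [conv']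
          rw [Finset.sum_range_succ]
          have hsub : ∑ j ∈ range M, qPoch 0 b (M + 1 - (j+1)) * b ^ (j+1)
              = ∑ j ∈ range M, ((1-b) * b^(j+1)) := by
            apply Finset.sum_congr rfl
            intro j hj
            have hj' : j < M := mem_range.mp hj
            rw [show M+1-(j+1) = (M-(j+1))+1 by omega, qP0]
          have hsub2 : ∑ j ∈ range M, ((1-b) * b^(j+1))
                - ∑ j ∈ range M, qPoch 0 b (M - (j+1)) * b^(j+1)
              = ∑ j ∈ range M, ((1-b) * b^(j+1) - qPoch 0 b (M - (j+1)) * b^(j+1)) :=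
            (Finset.sum_sub_distrib _ _).symm
          have hsingle : ∑ j ∈ range M, ((1-b) * b^(j+1) - qPoch 0 b (M - (j+1)) * b^(j+1))
              = -(b * b^M) := by
            obtain ⟨M', rfl⟩ : ∃ M', M = M' + 1 := ⟨M - 1, by omega⟩
            rw [Finset.sum_range_succ]
            have hzz : ∀ j ∈ range M', (1-b) * b^(j+1) - qPoch 0 b (M'+1 - (j+1)) * b^(j+1) = 0 := by
              intro j hj
              have hj' : j < M' := mem_range.mp hj
              rw [show M'+1-(j+1) = (M'-(j+1))+1 by omega, qP0]
              ring
            rw [Finset.sum_congr rfl hzz]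
            simp only [Finset.sum_const_zero, Nat.sub_self, qPoch_zero, one_mul, zero_add]
            ring
          have ihv := ih hM1
          rw [conv'] at ihv
          rw [show M+1-(M+1) = 0 by omega, qPoch_zero]
          linear_combination hsub + hsub2 + hsingle + ihv
    rw [geo N hN]
    ring
  · -- q ≠ 0 case
    have hqp : ∀ m, qPoch q q m ≠ 0 := by
      intro m
      unfold qPoch
      rw [Finset.prod_ne_zero_iff]
      intro k _
      have habs : ‖q * q^k‖ < 1 := by
        rw [show q * q^k = q^(k+1) by rw [pow_succ]; ring, norm_pow]
        exact pow_lt_one₀ (norm_nonneg q) hq (by omega)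
      intro hzero
      have hone : q * q^k = 1 := by linear_combination -hzero
      rw [hone] at habs
      simp at habs
    have hbn : ∀ n, n ≤ N → qPoch q b n ≠ 0 := by
      intro n hn
      unfold qPoch
      rw [Finset.prod_ne_zero_iff]
      intro k hk
      have hk' := mem_range.mp hk
      exact hb' k (by omega)
    have hbN : qPoch q b N ≠ 0 := hbn N le_rfl
    have hEfac : ∀ k, 1 ≤ k → k ≤ N → e - q^k ≠ 0 := fun k h1 h2 => sub_ne_zero_of_ne (he' k h1 h2)
    have hE0 : Eprod q e N 0 ≠ 0 := by
      unfold Eprod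
      rw [Finset.prod_ne_zero_iff]
      intro k hk
      have hk' := mem_Ico.mp hk
      exact hEfac k (by omega) (by omega)
    have hqe : ∀ n, n ≤ N → qPoch q (q/e) n ≠ 0 := by
      intro n hn
      unfold qPoch
      rw [Finset.prod_ne_zero_iff]
      intro k hk
      have hk' := mem_range.mp hk
      intro h0
      have h1 : q * q^k = e := by
        have h2 : (q/e) * q^k = 1 := by linear_combination -h0
        calc q * q^k = (q/e) * q^k * e := by field_simp
          _ = 1 * e := by rw [h2]
          _ = e := one_mul e
      apply he' (k+1) (by omega) (by omega)
      rw [← h1, pow_succ]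
      ring
    have hz : ∀ c, c ≠ 1 → Dfun q a b e N c = 0 := by
      intro c hc
      have h := claim1 q a b e hqp N c
      rw [master q b hq0 hqp N a c e, sub_self] at h
      have h1c : (1:ℂ) - c ≠ 0 := sub_ne_zero_of_ne (fun hh => hc (by linear_combination -hh))
      exact (mul_eq_zero.mp h).resolve_left h1c
    have hD1 := Dfun_one q a b e N hz
    unfold Dfun at hD1
    simp only [one_mul, mul_one] at hD1
    rw [conv, conv, conv]
    simp only [Nat.add_sub_cancel]
    have hL : qPoch q b N * Eprod q e N 0 * (∑ j ∈ range N,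
          qBinom q N (j+1) * (-1 : ℂ) ^ (j+1) * qPoch q q j * qPoch q (b / a) (j+1) * a ^ (j+1) *
            q ^ ((j+1) * ((j+1) + 1) / 2) /
          (qPoch q b (j+1) * qPoch q (q / e) (j+1) * e ^ (j+1)))
        = ∑ j ∈ range N, qBinom q N (j+1) * ((-1)^(j+1) * q^((j+1)*((j+1)+1)/2))
            * (∏ k ∈ range (j+1), (a - b*q^k)) * qPoch q q j
            * qPoch q (b*q^(j+1)) (N-(j+1)) * Eprod q e N (j+1) := by
      rw [Finset.mul_sum]
      apply Finset.sum_congr rfl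
      intro j hj
      have hj' : j < N := mem_range.mp hj
      have hGa : qPoch q (b/a) (j+1) * a^(j+1) = ∏ k ∈ range (j+1), (a - b*q^k) := by
        unfold qPoch
        have hpc : a^(j+1) = ∏ _k ∈ range (j+1), a := by
          rw [Finset.prod_const, Finset.card_range]
        rw [hpc, ← Finset.prod_mul_distrib]
        exact Finset.prod_congr rfl fun k _ => by field_simp; try ring
      have hFe : qPoch q (q/e) (j+1) * e^(j+1) = ∏ k ∈ Ico (0+1) (j+1+1), (e - q^k) := by
        rw [Finset.prod_Ico_eq_prod_range, show j+1+1-(0+1) = j+1 from by omega]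
        unfold qPoch
        have hpc : e^(j+1) = ∏ _k ∈ range (j+1), e := by
          rw [Finset.prod_const, Finset.card_range]
        rw [hpc, ← Finset.prod_mul_distrib]
        exact Finset.prod_congr rfl fun k _ => by field_simp; try ring
      obtain ⟨m, rfl⟩ : ∃ m, N = j + 1 + m := ⟨N - (j+1), by omega⟩
      have hsplit : qPoch q b (j+1+m) = qPoch q b (j+1) * qPoch q (b*q^(j+1)) m :=
        qPoch_add q b (j+1) m
      have hE0' : Eprod q e (j+1+m) 0
          = (∏ k ∈ Ico (0+1) (j+1+1), (e - q^k)) * Eprod q e (j+1+m) (j+1) := by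
        unfold Eprod
        exact (Finset.prod_Ico_consecutive _ (by omega) (by omega)).symm
      rw [show j+1+m-(j+1) = m from by omega, hsplit, hE0', ← hGa, ← hFe]
      have h1 : qPoch q b (j+1) ≠ 0 := hbn (j+1) (by omega)
      have h2 : qPoch q (q/e) (j+1) ≠ 0 := hqe (j+1) (by omega)
      field_simp
    have hR1 : qPoch q b N * Eprod q e N 0 * (∑ j ∈ range N,
          qBinom q N (j+1) * qPoch q q j * qPoch q b (N - (j+1)) *
            qPoch q (a * q / (b * e)) (j+1) * b ^ (j+1) /
            (qPoch q b N * qPoch q (q / e) (j+1)))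
        = ∑ j ∈ range N, qBinom q N (j+1) * (∏ k ∈ range (j+1), (b*e - a*q^(k+1)))
            * qPoch q b (N-(j+1)) * qPoch q q j * Eprod q e N (j+1) := by
      rw [Finset.mul_sum]
      apply Finset.sum_congr rfl
      intro j hj
      have hj' : j < N := mem_range.mp hj
      have hPbe : qPoch q (a*q/(b*e)) (j+1) * (b*e)^(j+1)
          = ∏ k ∈ range (j+1), (b*e - a*q^(k+1)) := by
        unfold qPoch
        have hpc : (b*e)^(j+1) = ∏ _k ∈ range (j+1), (b*e) := by
          rw [Finset.prod_const, Finset.card_range]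
        rw [hpc, ← Finset.prod_mul_distrib]
        refine Finset.prod_congr rfl fun k _ => ?_
        field_simp
        ring
      have hFe : qPoch q (q/e) (j+1) * e^(j+1) = ∏ k ∈ Ico (0+1) (j+1+1), (e - q^k) := by
        rw [Finset.prod_Ico_eq_prod_range, show j+1+1-(0+1) = j+1 from by omega]
        unfold qPoch
        have hpc : e^(j+1) = ∏ _k ∈ range (j+1), e := by
          rw [Finset.prod_const, Finset.card_range]
        rw [hpc, ← Finset.prod_mul_distrib]
        exact Finset.prod_congr rfl fun k _ => by field_simp; try ring
      have hE0' : Eprod q e N 0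
          = (∏ k ∈ Ico (0+1) (j+1+1), (e - q^k)) * Eprod q e N (j+1) := by
        unfold Eprod
        exact (Finset.prod_Ico_consecutive _ (by omega) (by omega)).symm
      rw [hE0', ← hPbe, ← hFe]
      have h2 : qPoch q (q/e) (j+1) ≠ 0 := hqe (j+1) (by omega)
      field_simp
      ring
    have hR2 : qPoch q b N * Eprod q e N 0 * (∑ j ∈ range N,
          b * q ^ j / (1 - b * q ^ j))
        = (∑ k ∈ range N, b*q^k * qPoch q b k * qPoch q (b*q^(k+1)) (N-1-k)) * Eprod q e N 0 := by
      rw [Finset.mul_sum, Finset.sum_mul]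
      apply Finset.sum_congr rfl
      intro j hj
      have hj' : j < N := mem_range.mp hj
      obtain ⟨m, rfl⟩ : ∃ m, N = j + 1 + m := ⟨N - (j+1), by omega⟩
      have hsplit : qPoch q b (j+1+m) = qPoch q b j * ((1 - b*q^j) * qPoch q (b*q^(j+1)) m) := by
        rw [show j+1+m = j+(m+1) from by omega, qPoch_add q b j (m+1), qPoch_succ' q (b*q^j) m,
          show b*q^j*q = b*q^(j+1) from by rw [pow_succ]; ring]
      rw [show j+1+m-1-j = m from by omega, hsplit]
      have h1 : 1 - b*q^j ≠ 0 := hb' j (by omega)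
      field_simp
    have hfin : qPoch q b N * Eprod q e N 0 * ((∑ j ∈ range N,
          qBinom q N (j+1) * (-1 : ℂ) ^ (j+1) * qPoch q q j * qPoch q (b / a) (j+1) * a ^ (j+1) *
            q ^ ((j+1) * ((j+1) + 1) / 2) /
          (qPoch q b (j+1) * qPoch q (q / e) (j+1) * e ^ (j+1)))
        - ((∑ j ∈ range N,
          qBinom q N (j+1) * qPoch q q j * qPoch q b (N - (j+1)) *
            qPoch q (a * q / (b * e)) (j+1) * b ^ (j+1) /
            (qPoch q b N * qPoch q (q / e) (j+1)))
          - ∑ j ∈ range N, b * q ^ j / (1 - b * q ^ j))) = 0 := by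
      rw [mul_sub, mul_sub, hL, hR1, hR2]
      linear_combination hD1
    rcases mul_eq_zero.mp hfin with h | h
    · exact absurd h (mul_ne_zero hbN hE0)
    · linear_combination h
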